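/- Lattice summation bound: for every dimension d ≥ 1 there exists a constant C_d > 0 such that for every real a ≥ 4d + 4, Σ_{ν∈ℤ^d} Σ_{k∈ℕ, k > log^{1/d}(e+|ν|)} e^{−a (2k+1)^d / 2} ≤ C_d e^{−a}, where |ν| = Σ_{ℓ=1}^d |ν_ℓ| is the ℓ¹ norm on ℤ^d. -/

import Mathlib

/-!
For `L = log (e + |ν|) ≥ 1`, the condition `k > L^{1/d}` forces `k ≥ 2` and `k^d > L`; since
`a/4 ≥ d + 1`, the exponent `a (2k+1)^d / 2` then dominates `(d+1) L + a + k - 2`. Hence each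
term is at most `e^2 e^{-a} e^{-k} (e + |ν|)^{-(d+1)}`, and both `∑ e^{-k}` and the lattice sum
`∑_ν (e + |ν|)^{-(d+1)}` converge, the latter because `d + 1` exceeds the rank of `ℤ^d`.
-/

open Real

/-- ℓ¹ norm on the lattice `ℤ^d`. -/
def lnorm {d : ℕ} (ν : Fin d → ℤ) : ℤ := ∑ ℓ, |ν ℓ|

theorem tsum_tsum_le_tsum_mul_tsum_of_le_mul {α β : Type*} {f : α → β → ℝ}
    {g : α → ℝ} {h : β → ℝ} (hf : ∀ x y, 0 ≤ f x y)
    (hfgh : ∀ x y, f x y ≤ g x * h y) (hg : Summable g) (hh : Summable h) :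
    ∑' x, ∑' y, f x y ≤ (∑' x, g x) * ∑' y, h y := by
  have hsum (x : α) : Summable (f x) :=
    .of_nonneg_of_le (hf x) (hfgh x) (hh.mul_left (g x))
  have hinner (x : α) : ∑' y, f x y ≤ g x * ∑' y, h y := by
    rw [← tsum_mul_left]
    exact (hsum x).tsum_le_tsum (hfgh x) (hh.mul_left (g x))
  rw [← tsum_mul_right]
  exact Summable.tsum_le_tsum hinner
    (.of_nonneg_of_le (fun x => tsum_nonneg (hf x)) hinner (hg.mul_right _)) (hg.mul_right _)

theorem summable_norm_intCast_rpow_neg {ι : Type*} [Fintype ι] {r : ℝ}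
    (hr : (Fintype.card ι : ℝ) < r) :
    Summable fun ν : ι → ℤ => ‖((↑) ∘ ν : ι → ℝ)‖ ^ (-r) := by
  let Λ := Submodule.span ℤ (Set.range (Pi.basisFun ℝ ι))
  have hrank : Module.finrank ℤ Λ = Fintype.card ι := by rw [ZLattice.rank ℝ Λ]; simp
  have hΛ : Summable fun z : Λ => ‖(z : ι → ℝ)‖ ^ (-r) :=
    ZLattice.summable_norm_rpow Λ (-r) (by rw [hrank]; linarith)
  have hmem (ν : ι → ℤ) : ((↑) ∘ ν : ι → ℝ) ∈ Λ :=
    ((Pi.basisFun ℝ ι).mem_span_iff_repr_mem ℤ _).2 fun i => ⟨ν i, by simp⟩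
  have hinj : Function.Injective (fun ν : ι → ℤ => (⟨_, hmem ν⟩ : Λ)) := fun ν μ h =>
    funext fun i => by simpa using congrFun (congrArg Subtype.val h) i
  exact (hΛ.comp_injective hinj).congr fun ν => by simp [Function.comp_def]

theorem lnorm_nonneg {d : ℕ} (ν : Fin d → ℤ) : 0 ≤ lnorm ν :=
  Finset.sum_nonneg fun ℓ _ => abs_nonneg (ν ℓ)

theorem norm_intCast_le_lnorm {d : ℕ} (ν : Fin d → ℤ) :
    ‖((↑) ∘ ν : Fin d → ℝ)‖ ≤ lnorm ν := by
  refine (pi_norm_le_iff_of_nonneg (mod_cast lnorm_nonneg ν)).2 fun ℓ => ?_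
  simp only [Function.comp_apply, Real.norm_eq_abs, lnorm]
  push_cast
  exact Finset.single_le_sum (f := fun ℓ => |(ν ℓ : ℝ)|) (fun _ _ => abs_nonneg _)
    (Finset.mem_univ ℓ)

theorem summable_add_lnorm_rpow_neg {d : ℕ} {c r : ℝ} (hc : 0 < c) (hr : (d : ℝ) < r) :
    Summable fun ν : Fin d → ℤ => (c + lnorm ν) ^ (-r) := by
  refine .of_norm_bounded_eventually
    (summable_norm_intCast_rpow_neg (ι := Fin d) (by simpa using hr)) ?_
  filter_upwards [Filter.eventually_cofinite_ne 0] with ν hν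
  have hpos : 0 < ‖((↑) ∘ ν : Fin d → ℝ)‖ :=
    norm_pos_iff.2 fun h => hν (funext fun ℓ => by simpa using congrFun h ℓ)
  rw [Real.norm_of_nonneg (by have := lnorm_nonneg ν; positivity)]
  exact Real.rpow_le_rpow_of_nonpos hpos (by linarith [norm_intCast_le_lnorm ν])
    (by linarith)

theorem add_mul_add_le_mul_two_mul_add_one_pow {d : ℕ} (hd : 0 < d) {a k L : ℝ}
    (ha : 4 * d + 4 ≤ a) (hk : 2 ≤ k) (hL : 0 ≤ L) (hLk : L ≤ k ^ d) :
    (d + 1) * L + (a + k - 2) ≤ a * (2 * k + 1) ^ d / 2 := by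
  have hd1 : (1 : ℝ) ≤ d := mod_cast hd
  have hkK : k ^ d ≤ (2 * k + 1) ^ d := pow_le_pow_left₀ (by linarith) (by linarith) d
  have hK : 2 * k + 1 ≤ (2 * k + 1) ^ d := le_self_pow₀ (by linarith) hd.ne'
  have h1 : (d + 1) * L ≤ a / 4 * (2 * k + 1) ^ d := by
    calc (d + 1) * L ≤ a / 4 * L := by gcongr; linarith
      _ ≤ a / 4 * (2 * k + 1) ^ d := mul_le_mul_of_nonneg_left (hLk.trans hkK) (by linarith)
  have h2 : a + k - 2 ≤ a / 4 * (2 * k + 1) ^ d := by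
    calc a + k - 2 ≤ a / 4 * (2 * k + 1) := by nlinarith
      _ ≤ a / 4 * (2 * k + 1) ^ d := by gcongr; linarith
  linarith

theorem exp_neg_mul_two_mul_add_one_pow_le {d : ℕ} (hd : 0 < d) {a : ℝ}
    (ha : 4 * (d : ℝ) + 4 ≤ a) (ν : Fin d → ℤ) {k : ℕ}
    (hk : log (exp 1 + lnorm ν) ^ ((1 : ℝ) / d) < k) :
    exp (-(a * (2 * (k : ℝ) + 1) ^ d) / 2) ≤
      (exp 1 + lnorm ν) ^ (-((d : ℝ) + 1)) * (exp 2 * exp (-a) * exp (-k)) := by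
  set X : ℝ := exp 1 + lnorm ν
  have hX : exp 1 ≤ X := le_add_of_nonneg_right (mod_cast lnorm_nonneg ν)
  have hX0 : 0 < X := (exp_pos 1).trans_le hX
  have hL : 1 ≤ log X := by rwa [le_log_iff_exp_le hX0]
  have hLk : log X < (k : ℝ) ^ d := by
    rw [one_div, rpow_inv_lt_iff_of_pos (by linarith) k.cast_nonneg (mod_cast hd)] at hk
    exact_mod_cast hk
  have hk1 : 1 < k := by exact_mod_cast (one_le_rpow hL (by positivity)).trans_lt hk
  have hk2 : (2 : ℝ) ≤ k := by exact_mod_cast hk1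
  have hexponent := add_mul_add_le_mul_two_mul_add_one_pow hd ha hk2 (by linarith) hLk.le
  rw [rpow_def_of_pos hX0, ← exp_add, ← exp_add, ← exp_add]
  exact exp_le_exp.2 (by linarith)

/-- Lattice summation bound:
`Σ_ν Σ_{k > log^{1/d}(e+|ν|)} e^{-a(2k+1)^d/2} ≤ C_d e^{-a}` for all `a ≥ 4d+4`. -/
theorem statement10 (d : ℕ) (hd : 0 < d) :
    ∃ C > (0:ℝ), ∀ a : ℝ, 4 * (d : ℝ) + 4 ≤ a →
      (∑' ν : Fin d → ℤ, ∑' k : ℕ,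
          if Real.log (Real.exp 1 + (lnorm ν : ℝ)) ^ ((1:ℝ)/(d:ℝ)) < (k : ℝ)
          then Real.exp (-(a * (2 * (k:ℝ) + 1) ^ d) / 2) else 0)
        ≤ C * Real.exp (-a) := by
  have hlattice := summable_add_lnorm_rpow_neg (d := d) (exp_pos 1) (lt_add_one (d : ℝ))
  refine ⟨(∑' ν : Fin d → ℤ, (exp 1 + lnorm ν) ^ (-((d : ℝ) + 1))) *
      (exp 2 * ∑' k : ℕ, exp (-k)), ?_, fun a ha => ?_⟩
  · have hpos (ν : Fin d → ℤ) : 0 < (exp 1 + lnorm ν) ^ (-((d : ℝ) + 1)) := by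
      have := lnorm_nonneg ν; positivity
    have hlattice_pos := hlattice.tsum_pos (fun ν => (hpos ν).le) 0 (hpos 0)
    have hgeom_pos := summable_exp_neg_nat.tsum_pos (fun _ => (exp_pos _).le) 0 (exp_pos _)
    positivity
  calc _ ≤ (∑' ν : Fin d → ℤ, (exp 1 + lnorm ν) ^ (-((d : ℝ) + 1))) *
        ∑' k : ℕ, exp 2 * exp (-a) * exp (-k) := by
        refine tsum_tsum_le_tsum_mul_tsum_of_le_mul (fun ν k => ?_) (fun ν k => ?_) hlattice
          (summable_exp_neg_nat.mul_left _)
        · split_ifs <;> positivity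
        · split_ifs with hk
          · exact exp_neg_mul_two_mul_add_one_pow_le hd ha ν hk
          · have := lnorm_nonneg ν; positivity
    _ = _ := by rw [tsum_mul_left]; ring
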